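/- arXiv:2106.08560 — 2 statements merged into one kernel-verified Lean document; each statement's English description precedes it below -/
import Mathlib

section
/- Let k be a field of characteristic different from 2, let ε, c ∈ k^×, and consider the quadratic form q(y₀,y₁,y₂,y₃) = c·(y₀y₁ − y₂² + ε·y₃²) on k⁴, with associated bilinear form B_q(x,x') = c·(x₀x₁' + x₁x₀' − 2x₂x₂' + 2ε·x₃x₃'). Let x, x' ∈ k⁴ satisfy q(x) = q(x') = 0, x₀·x₀' ≠ 0, and B_q(x,x') ≠ 0. Then the quaternion algebras ℍ[k; ε, −B_q(x,x')/(x₀x₀')] and ℍ[k; ε, −c] are isomorphic as k-algebras; indeed, −B_q(x,x')/(x₀x₀') = −c·((x₂/x₀ − x₂'/x₀')² − ε·(x₃/x₀ − x₃'/x₀')²), so the two second slots differ by a value of the norm form u² − ε·v². -/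
/-!
Clearing denominators, the isotropy of `x` and `x'` turns `-B_q(x,x')/(x₀x₀')` into
`-c·N(x₂/x₀ - x₂'/x₀', x₃/x₀ - x₃'/x₀')` with `N(u,v) = u² - εv²`, a value of the norm form of
`k(√ε)`; this value is nonzero because `B_q(x,x') ≠ 0`. Multiplying the second slot of
`ℍ[k; a, b]` by a nonzero norm `u² - av²` does not change the algebra: `uj + vk` squares to
`b(u² - av²)` and anticommutes with `i`.
-/

open scoped Quaternion

namespace QuaternionAlgebra

variable {k : Type*} [Field k]

def twistBasis (a b u v : k) : Basis ℍ[k, a, b] a 0 (b * (u ^ 2 - a * v ^ 2)) where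
  i := ⟨0, 1, 0, 0⟩
  j := ⟨0, 0, u, v⟩
  k := ⟨0, 0, a * v, u⟩
  i_mul_i := by ext <;> simp
  j_mul_j := by ext <;> simp <;> ring
  i_mul_j := by ext <;> simp
  j_mul_i := by ext <;> simp

def untwistBasis (a b u v : k) (h : u ^ 2 - a * v ^ 2 ≠ 0) :
    Basis ℍ[k, a, b * (u ^ 2 - a * v ^ 2)] a 0 b where
  i := ⟨0, 1, 0, 0⟩
  j := ⟨0, 0, u / (u ^ 2 - a * v ^ 2), -(v / (u ^ 2 - a * v ^ 2))⟩
  k := ⟨0, 0, a * -(v / (u ^ 2 - a * v ^ 2)), u / (u ^ 2 - a * v ^ 2)⟩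
  i_mul_i := by ext <;> simp
  j_mul_j := by ext <;> simp <;> field_simp <;> ring
  i_mul_j := by ext <;> simp
  j_mul_i := by ext <;> simp

theorem nonempty_algEquiv_mul_norm (a b u v : k) (h : u ^ 2 - a * v ^ 2 ≠ 0) :
    Nonempty (ℍ[k, a, b * (u ^ 2 - a * v ^ 2)] ≃ₐ[k] ℍ[k, a, b]) := by
  refine ⟨AlgEquiv.ofAlgHom (twistBasis a b u v).liftHom (untwistBasis a b u v h).liftHom ?_ ?_⟩ <;>
  · ext <;>
      simp [Basis.lift, twistBasis, untwistBasis, Basis.self] <;>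
      field_simp <;> ring

end QuaternionAlgebra

theorem neg_polar_div_eq_of_isotropic {k : Type*} [Field k] (ε c : k) (x x' : Fin 4 → k)
    (hqx : c * (x 0 * x 1 - x 2 ^ 2 + ε * x 3 ^ 2) = 0)
    (hqx' : c * (x' 0 * x' 1 - x' 2 ^ 2 + ε * x' 3 ^ 2) = 0)
    (hx0 : x 0 * x' 0 ≠ 0) :
    -(c * (x 0 * x' 1 + x 1 * x' 0 - 2 * (x 2 * x' 2) + 2 * ε * (x 3 * x' 3))) / (x 0 * x' 0) =
      -c * ((x 2 / x 0 - x' 2 / x' 0) ^ 2 - ε * (x 3 / x 0 - x' 3 / x' 0) ^ 2) := by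
  obtain ⟨hx, hx'⟩ := mul_ne_zero_iff.mp hx0
  field_simp
  linear_combination (-x' 0 ^ 2) * hqx + (-x 0 ^ 2) * hqx'

theorem quaternionAlgebra_of_isotropic_vectors_general
    (k : Type) [Field k]
    (ε c : k)
    (x x' : Fin 4 → k)
    (hqx : c * (x 0 * x 1 - x 2 ^ 2 + ε * x 3 ^ 2) = 0)
    (hqx' : c * (x' 0 * x' 1 - x' 2 ^ 2 + ε * x' 3 ^ 2) = 0)
    (hx0 : x 0 * x' 0 ≠ 0)
    (B : k)
    (hB : B = c * (x 0 * x' 1 + x 1 * x' 0 - 2 * (x 2 * x' 2) + 2 * ε * (x 3 * x' 3)))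
    (hB0 : B ≠ 0) :
    (-B / (x 0 * x' 0) =
      -c * ((x 2 / x 0 - x' 2 / x' 0) ^ 2 - ε * (x 3 / x 0 - x' 3 / x' 0) ^ 2)) ∧
    Nonempty (ℍ[k, ε, -B / (x 0 * x' 0)] ≃ₐ[k] ℍ[k, ε, -c]) := by
  have hslot := hB ▸ neg_polar_div_eq_of_isotropic ε c x x' hqx hqx' hx0
  have hnorm : (x 2 / x 0 - x' 2 / x' 0) ^ 2 - ε * (x 3 / x 0 - x' 3 / x' 0) ^ 2 ≠ 0 := by
    intro h
    rw [h, mul_zero, div_eq_zero_iff, neg_eq_zero] at hslot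
    exact hslot.elim hB0 hx0
  refine ⟨hslot, ?_⟩
  rw [hslot]
  exact QuaternionAlgebra.nonempty_algEquiv_mul_norm ε (-c) _ _ hnorm

/-- For the quadratic form `q(y) = c·(y₀y₁ − y₂² + ε·y₃²)` and isotropic vectors `x, x'` with
`x₀·x₀' ≠ 0` and `B_q(x,x') ≠ 0`, the quaternion algebra `(ε, −B_q(x,x')/(x₀x₀'))` is
isomorphic to `(ε, −c)`; indeed the two second slots differ by a value of the norm form
`u² − ε·v²`. -/
theorem quaternionAlgebra_of_isotropic_vectors
    (k : Type) [Field k] (hchar : ringChar k ≠ 2)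
    (ε c : k) (hε : ε ≠ 0) (hc : c ≠ 0)
    (x x' : Fin 4 → k)
    (hqx : c * (x 0 * x 1 - x 2 ^ 2 + ε * x 3 ^ 2) = 0)
    (hqx' : c * (x' 0 * x' 1 - x' 2 ^ 2 + ε * x' 3 ^ 2) = 0)
    (hx0 : x 0 * x' 0 ≠ 0)
    (B : k)
    (hB : B = c * (x 0 * x' 1 + x 1 * x' 0 - 2 * (x 2 * x' 2) + 2 * ε * (x 3 * x' 3)))
    (hB0 : B ≠ 0) :
    (-B / (x 0 * x' 0) =
      -c * ((x 2 / x 0 - x' 2 / x' 0) ^ 2 - ε * (x 3 / x 0 - x' 3 / x' 0) ^ 2)) ∧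
    Nonempty (ℍ[k, ε, -B / (x 0 * x' 0)] ≃ₐ[k] ℍ[k, ε, -c]) :=
  quaternionAlgebra_of_isotropic_vectors_general k ε c x x' hqx hqx' hx0 B hB hB0
end

section
/- Let k be a field of characteristic different from 2 and let q₁, q₂ ∈ k[x₀,…,x₄] define a smooth complete intersection of two quadrics X ⊂ ℙ⁴_k. Then the following are equivalent: (i) there exist (a,b) ∈ k² ∖ {(0,0)} and a 2-dimensional k-linear subspace W ⊆ k⁵ such that (a·q₁ + b·q₂)(w) = 0 for all w ∈ W (i.e., the variety 𝒢 parametrizing pairs consisting of a quadric in the pencil spanned by q₁, q₂ together with a line on it has a k-point); (ii) there exists a field extension K of k with [K:k] ≤ 2 such that X(K) ≠ ∅. -/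
/-!
If `a q₁ + b q₂` vanishes on a plane `W` with, say, `a ≠ 0`, then over every extension `K` each
zero of `q₂` on `W ⊗ K` is a zero of `q₁`, and the binary form `q₂|_W` acquires a zero over an
extension of degree at most `2`.

Conversely, a `k`-point `y` of `X` lies in the common kernel of the two polar forms at `y`, which
has dimension at least `3`; for `v` in it outside `k y`, both `qᵢ` restrict to `span {v, y}` as
multiples of `s²`, so a suitable combination vanishes there. A point `u + β v` over a quadratic
extension with `β² = e + f β` gives `qᵢ(u) = -e qᵢ(v)` and `polar qᵢ (u, v) = -f qᵢ(v)`, so again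
both restrictions are multiples of one binary form, unless `u, v` are dependent, in which case the
point is a multiple of a `k`-point.
-/

open MvPolynomial
/-- The Jacobian criterion: the homogeneous quadrics `q₁, q₂` define a smooth complete
intersection: at every nonzero common zero over an algebraic closure, the `2 × n` matrix of
partial derivatives has rank `2`. -/
def DefinesSmoothCI {k : Type} [Field k] {n : ℕ} (q₁ q₂ : MvPolynomial (Fin n) k) : Prop :=
  ∀ a : Fin n → AlgebraicClosure k, a ≠ 0 →
    eval a (map (algebraMap k (AlgebraicClosure k)) q₁) = 0 →
    eval a (map (algebraMap k (AlgebraicClosure k)) q₂) = 0 →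
    (Matrix.of fun (i : Fin 2) (j : Fin n) =>
      eval a (pderiv j (map (algebraMap k (AlgebraicClosure k)) (![q₁, q₂] i)))).rank = 2

/-- `X(K) ≠ ∅`: there is a nonzero solution of `q₁ = q₂ = 0` with coordinates in `K`. -/
def HasPointIn {k : Type} [Field k] {n : ℕ} (q₁ q₂ : MvPolynomial (Fin n) k)
    (K : Type) [Field K] [Algebra k K] : Prop :=
  ∃ x : Fin n → K, x ≠ 0 ∧ eval x (map (algebraMap k K) q₁) = 0 ∧
    eval x (map (algebraMap k K) q₂) = 0

open Module QuadraticMap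

namespace MvPolynomial

variable {R S σ : Type*} [CommRing R] [CommRing S] {q : MvPolynomial σ R}

theorem exists_eq_single_add_single_of_degree_eq_two {d : σ →₀ ℕ} (hd : d.degree = 2) :
    ∃ i j : σ, d = Finsupp.single i 1 + Finsupp.single j 1 := by
  classical
  obtain ⟨i, j, hij⟩ := Multiset.card_eq_two.1 (by rwa [Finsupp.card_toMultiset])
  refine ⟨i, j, ?_⟩
  rw [← Finsupp.toMultiset_toFinsupp d, hij]
  simp [Multiset.insert_eq_cons, ← Multiset.singleton_add]

theorem IsHomogeneous.exists_quadraticMap (hq : q.IsHomogeneous 2) :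
    ∃ Q : QuadraticMap R (σ → R) R, ∀ x, Q x = eval x q := by
  classical
  rw [q.as_sum]
  refine Finset.sum_induction _ (fun p ↦ ∃ Q : QuadraticMap R (σ → R) R, ∀ x, Q x = eval x p)
    (fun p₁ p₂ ⟨Q₁, h₁⟩ ⟨Q₂, h₂⟩ ↦ ⟨Q₁ + Q₂, by simp [h₁, h₂]⟩) ⟨0, by simp⟩ ?_
  intro d hd
  obtain ⟨i, j, rfl⟩ := exists_eq_single_add_single_of_degree_eq_two
    (by rw [Finsupp.degree_eq_weight_one]; exact hq (mem_support_iff.mp hd))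
  refine ⟨coeff (Finsupp.single i 1 + Finsupp.single j 1) q •
    QuadraticMap.linMulLin (LinearMap.proj i) (LinearMap.proj j), fun x ↦ ?_⟩
  rw [eval_monomial, Finsupp.prod_add_index' (fun _ ↦ pow_zero _) (fun _ _ _ ↦ pow_add _ _ _)]
  simp

noncomputable def IsHomogeneous.toQuadraticMap (hq : q.IsHomogeneous 2) :
    QuadraticMap R (σ → R) R :=
  hq.exists_quadraticMap.choose

@[simp]
theorem IsHomogeneous.toQuadraticMap_apply (hq : q.IsHomogeneous 2) (x : σ → R) :
    hq.toQuadraticMap x = eval x q :=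
  hq.exists_quadraticMap.choose_spec x

theorem eval_comp_map (f : R →+* S) (p : MvPolynomial σ R) (x : σ → R) :
    eval (f ∘ x) (map f p) = f (eval x p) := by
  rw [eval_map, eval, coe_eval₂Hom, eval₂_comp_left, RingHom.comp_id]

theorem IsHomogeneous.eval_map_smul_add_smul (hq : q.IsHomogeneous 2) (f : R →+* S)
    (u v : σ → R) (s t : S) :
    eval (s • (f ∘ u) + t • (f ∘ v)) (map f q) =
      s ^ 2 * f (eval u q) + s * t * f (QuadraticMap.polar hq.toQuadraticMap u v) +
        t ^ 2 * f (eval v q) := by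
  set Q := (hq.map f).toQuadraticMap
  have hQ (x : σ → R) : Q (f ∘ x) = f (eval x q) := by
    rw [toQuadraticMap_apply, eval_comp_map]
  have hpolar : QuadraticMap.polar Q (f ∘ u) (f ∘ v) =
      f (QuadraticMap.polar hq.toQuadraticMap u v) := by
    have : f ∘ u + f ∘ v = f ∘ (u + v) := by ext; simp
    simp only [QuadraticMap.polar, this, hQ, toQuadraticMap_apply, map_sub]
  rw [← toQuadraticMap_apply (hq.map f), QuadraticMap.map_add Q, QuadraticMap.map_smul,
    QuadraticMap.map_smul, QuadraticMap.polar_smul_left, QuadraticMap.polar_smul_right, hpolar,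
    hQ, hQ]
  simp only [smul_eq_mul]; ring

end MvPolynomial

section LinearAlgebra

variable {k V : Type*} [Field k] [AddCommGroup V] [Module k V]

theorem finrank_span_pair {u v : V} (huv : LinearIndependent k ![u, v]) :
    finrank k (Submodule.span k {u, v}) = 2 := by
  have := finrank_span_eq_card huv
  rwa [Matrix.range_cons_cons_empty, Fintype.card_fin] at this

theorem Submodule.exists_linearIndependent_pair_of_finrank_eq_two {W : Submodule k V}
    (hW : finrank k W = 2) :
    ∃ w₁ ∈ W, ∃ w₂ ∈ W, LinearIndependent k ![w₁, w₂] := by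
  have : FiniteDimensional k W := .of_finrank_pos (by omega)
  set B := finBasisOfFinrankEq k W hW
  refine ⟨B 0, (B 0).2, B 1, (B 1).2, ?_⟩
  rw [show ![(B 0 : V), B 1] = W.subtype ∘ B by ext i; fin_cases i <;> rfl]
  exact B.linearIndependent.map' W.subtype W.ker_subtype

theorem exists_linearIndependent_one_of_finrank_eq_two {K : Type*} [Ring K] [Nontrivial K]
    [Algebra k K] (hK : finrank k K = 2) :
    ∃ β : K, LinearIndependent k ![1, β] ∧ ∀ z : K, ∃ s t : k, s • 1 + t • β = z := by
  have : FiniteDimensional k K := .of_finrank_pos (by omega)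
  obtain ⟨β, hβ⟩ : ∃ β : K, β ∉ Submodule.span k {1} := by
    by_contra! h
    have := Submodule.finrank_mono (show ⊤ ≤ Submodule.span k {(1 : K)} from fun z _ ↦ h z)
    rw [finrank_top, finrank_span_singleton one_ne_zero] at this
    omega
  have hli : LinearIndependent k ![1, β] := by
    rw [LinearIndependent.pair_iff' one_ne_zero]
    exact fun a h ↦ hβ (h ▸ Submodule.smul_mem _ a (Submodule.mem_span_singleton_self 1))
  refine ⟨β, hli, fun z ↦ Submodule.mem_span_pair.1 ?_⟩
  rw [← Matrix.range_cons_cons_empty 1 β ![], hli.span_eq_top_of_card_eq_finrank (by simp [hK])]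
  trivial

end LinearAlgebra

section Pencil

variable {k V : Type*} [Field k] [AddCommGroup V] [Module k V]

def PencilHasTotallyIsotropicPlane (Q₁ Q₂ : QuadraticForm k V) : Prop :=
  ∃ (a b : k) (W : Submodule k V), ¬(a = 0 ∧ b = 0) ∧ finrank k W = 2 ∧
    ∀ w ∈ W, (a • Q₁ + b • Q₂) w = 0

theorem QuadraticMap.apply_eq_zero_of_mem_span_pair {R M N : Type*} [CommRing R]
    [AddCommGroup M] [Module R M] [AddCommGroup N] [Module R N] {Q : QuadraticMap R M N}
    {u v w : M} (hu : Q u = 0) (hv : Q v = 0) (huv : polar Q u v = 0)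
    (hw : w ∈ Submodule.span R {u, v}) : Q w = 0 := by
  obtain ⟨s, t, rfl⟩ := Submodule.mem_span_pair.1 hw
  rw [QuadraticMap.map_add Q, QuadraticMap.map_smul, QuadraticMap.map_smul, polar_smul_left,
    polar_smul_right, hu, hv, huv]
  simp

/-- Here `Qᵢ (s • u + t • v) = (e s² + f s t + t²) Qᵢ v`, so the member of the pencil that
vanishes at `v` vanishes on the whole plane. -/
theorem pencilHasTotallyIsotropicPlane_of_proportional {Q₁ Q₂ : QuadraticForm k V} {u v : V}
    (huv : LinearIndependent k ![u, v]) (e f : k) (hu₁ : Q₁ u = e * Q₁ v)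
    (hu₂ : Q₂ u = e * Q₂ v) (hp₁ : polar Q₁ u v = f * Q₁ v) (hp₂ : polar Q₂ u v = f * Q₂ v) :
    PencilHasTotallyIsotropicPlane Q₁ Q₂ := by
  obtain ⟨a, b, hab, hv⟩ : ∃ a b : k, ¬(a = 0 ∧ b = 0) ∧ a * Q₁ v + b * Q₂ v = 0 := by
    by_cases h : Q₂ v = 0
    · exact ⟨0, 1, by simp, by simp [h]⟩
    · exact ⟨Q₂ v, -Q₁ v, by simp [h], by ring⟩
  refine ⟨a, b, Submodule.span k {u, v}, hab, finrank_span_pair huv, fun w hw ↦ ?_⟩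
  refine apply_eq_zero_of_mem_span_pair ?_ ?_ ?_ hw <;>
    simp only [FunLike.coe_add, FunLike.coe_smul, polar_add, polar_smul, Pi.add_apply,
      Pi.smul_apply, smul_eq_mul, hu₁, hu₂, hp₁, hp₂]
  · linear_combination e * hv
  · linear_combination hv
  · linear_combination f * hv

theorem pencilHasTotallyIsotropicPlane_of_common_zero [FiniteDimensional k V]
    (hV : 4 ≤ finrank k V) {Q₁ Q₂ : QuadraticForm k V} {y : V} (hy : y ≠ 0)
    (h₁ : Q₁ y = 0) (h₂ : Q₂ y = 0) : PencilHasTotallyIsotropicPlane Q₁ Q₂ := by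
  set φ := (polarBilin Q₁ y).prod (polarBilin Q₂ y)
  have hker : 2 ≤ finrank k (LinearMap.ker φ) := by
    have := LinearMap.finrank_range_add_finrank_ker φ
    have := (LinearMap.range φ).finrank_le
    simp only [finrank_prod, finrank_self] at this
    omega
  obtain ⟨v, hvφ, hvy⟩ : ∃ v ∈ LinearMap.ker φ, v ∉ Submodule.span k {y} := by
    by_contra! hle
    have := Submodule.finrank_mono (show LinearMap.ker φ ≤ Submodule.span k {y} from hle)
    rw [finrank_span_singleton hy] at this
    omega
  simp only [φ, LinearMap.mem_ker, LinearMap.prod_apply, Function.prod_apply, Prod.mk_eq_zero,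
    polarBilin_apply_apply] at hvφ
  refine pencilHasTotallyIsotropicPlane_of_proportional (u := y) (v := v) ?_ 0 0
    (by simp [h₁]) (by simp [h₂]) (by simp [hvφ.1]) (by simp [hvφ.2])
  rw [LinearIndependent.pair_iff' hy]
  exact fun a hav ↦ hvy (hav ▸ Submodule.smul_mem _ a (Submodule.mem_span_singleton_self y))

end Pencil

section Points

variable {k : Type} [Field k] {n : ℕ} {q q₁ q₂ : MvPolynomial (Fin n) k}

theorem HasPointIn.map {K L : Type} [Field K] [Algebra k K] [Field L] [Algebra k L]
    (φ : K →ₐ[k] L) (h : HasPointIn q₁ q₂ K) : HasPointIn q₁ q₂ L := by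
  obtain ⟨x, hx, hx₁, hx₂⟩ := h
  have hφ (q : MvPolynomial (Fin n) k) :
      eval (φ ∘ x) (MvPolynomial.map (algebraMap k L) q) =
        φ (eval x (MvPolynomial.map (algebraMap k K) q)) := by
    rw [← φ.comp_algebraMap, ← MvPolynomial.map_map]
    exact eval_comp_map (φ : K →+* L) _ x
  refine ⟨φ ∘ x, fun h0 ↦ hx (funext fun j ↦ φ.injective ?_), ?_, ?_⟩
  · simpa using congrFun h0 j
  · rw [hφ, hx₁, map_zero]
  · rw [hφ, hx₂, map_zero]

theorem pencilHasTotallyIsotropicPlane_of_hasPointIn_self (hn : 4 ≤ n)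
    (h₁ : q₁.IsHomogeneous 2) (h₂ : q₂.IsHomogeneous 2) (h : HasPointIn q₁ q₂ k) :
    PencilHasTotallyIsotropicPlane h₁.toQuadraticMap h₂.toQuadraticMap := by
  obtain ⟨y, hy, hy₁, hy₂⟩ := h
  rw [Algebra.algebraMap_self, map_id] at hy₁ hy₂
  exact pencilHasTotallyIsotropicPlane_of_common_zero (by simpa using hn) hy
    (by simpa using hy₁) (by simpa using hy₂)

theorem MvPolynomial.IsHomogeneous.eval_eq_zero_of_eval_map_smul_eq_zero {K : Type} [Field K]
    [Algebra k K] (hq : q.IsHomogeneous 2) {γ : K} (hγ : γ ≠ 0) {y : Fin n → k}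
    (h0 : eval (γ • (algebraMap k K ∘ y)) (map (algebraMap k K) q) = 0) : eval y q = 0 := by
  rw [← (hq.map _).toQuadraticMap_apply, QuadraticMap.map_smul, toQuadraticMap_apply,
    eval_comp_map, smul_eq_mul, mul_eq_zero, map_eq_zero] at h0
  exact h0.resolve_left (mul_self_ne_zero.2 hγ)

theorem pencilHasTotallyIsotropicPlane_of_hasPointIn_of_finrank_eq_two (hn : 4 ≤ n)
    {K : Type} [Field K] [Algebra k K] (hK : finrank k K = 2)
    (h₁ : q₁.IsHomogeneous 2) (h₂ : q₂.IsHomogeneous 2) (h : HasPointIn q₁ q₂ K) :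
    PencilHasTotallyIsotropicPlane h₁.toQuadraticMap h₂.toQuadraticMap := by
  obtain ⟨β, hβ, hspan⟩ := exists_linearIndependent_one_of_finrank_eq_two hK
  obtain ⟨e, f, hβ₂⟩ := hspan (β * β)
  rw [Algebra.smul_def, Algebra.smul_def, mul_one] at hβ₂
  obtain ⟨x, hx, hx₁, hx₂⟩ := h
  choose u v huv using fun j ↦ hspan (x j)
  set ι := algebraMap k K
  have hxuv : x = (1 : K) • (ι ∘ u) + β • (ι ∘ v) := by
    ext j; simp [← huv j, Algebra.smul_def, ι, mul_comm]
  -- `x = u + β v` with `β² = e + f β`; compare coefficients of `1` and `β`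
  have hcoef {q : MvPolynomial (Fin n) k} (hq : q.IsHomogeneous 2)
      (h0 : eval x (map ι q) = 0) :
      eval u q = -e * eval v q ∧ polar hq.toQuadraticMap u v = -f * eval v q := by
    rw [hxuv, hq.eval_map_smul_add_smul] at h0
    have := LinearIndependent.pair_iff.1 hβ (eval u q + e * eval v q)
      (polar hq.toQuadraticMap u v + f * eval v q) (by
        rw [← h0]; simp only [Algebra.smul_def, ι, map_add, map_mul]
        linear_combination ι (eval v q) * hβ₂)
    exact ⟨by linear_combination this.1, by linear_combination this.2⟩
  by_cases hli : LinearIndependent k ![u, v]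
  · obtain ⟨hu₁, hp₁⟩ := hcoef h₁ hx₁
    obtain ⟨hu₂, hp₂⟩ := hcoef h₂ hx₂
    exact pencilHasTotallyIsotropicPlane_of_proportional hli (-e) (-f)
      (by simpa using hu₁) (by simpa using hu₂) (by simpa using hp₁) (by simpa using hp₂)
  obtain ⟨γ, y, hγ, rfl⟩ : ∃ (γ : K) (y : Fin n → k), γ ≠ 0 ∧ x = γ • (ι ∘ y) := by
    rw [linearIndependent_fin2] at hli
    simp only [Matrix.cons_val_one, Matrix.cons_val_zero, not_and, not_forall, not_not] at hli
    by_cases hv : v = 0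
    · exact ⟨1, u, one_ne_zero, by simp [hxuv, hv]⟩
    obtain ⟨c, rfl⟩ := hli hv
    refine ⟨ι c + β, v, fun h0 ↦ ?_, ?_⟩
    · have := LinearIndependent.pair_iff.1 hβ c 1 (by simpa [Algebra.smul_def] using h0)
      simp at this
    · ext j; simp [hxuv, Algebra.smul_def, ι]; ring
  refine pencilHasTotallyIsotropicPlane_of_hasPointIn_self hn h₁ h₂
    ⟨y, fun h0 ↦ hx (by simp [h0]), ?_, ?_⟩
  · simpa using h₁.eval_eq_zero_of_eval_map_smul_eq_zero hγ hx₁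
  · simpa using h₂.eval_eq_zero_of_eval_map_smul_eq_zero hγ hx₂

variable {L : Type} [Field L] [Algebra k L] [IsAlgClosed L]

open IntermediateField in
theorem exists_intermediateField_finrank_le_two_quadratic_root {a b c : k} (ha : a ≠ 0) :
    ∃ K : IntermediateField k L, FiniteDimensional k K ∧ finrank k K ≤ 2 ∧
      ∃ ρ : K, algebraMap k K a * ρ ^ 2 + algebraMap k K b * ρ + algebraMap k K c = 0 := by
  set P : Polynomial k := .C a * .X ^ 2 + .C b * .X + .C c
  have hP : P.natDegree = 2 := Polynomial.natDegree_quadratic ha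
  have hP0 : P ≠ 0 := by rintro h; simp [h] at hP
  obtain ⟨ρ, hρ⟩ :=
    IsAlgClosed.exists_aeval_eq_zero L P (by simp [Polynomial.degree_eq_natDegree hP0, hP])
  have hint : IsIntegral k ρ := (isAlgebraic_iff_isIntegral).1 ⟨P, hP0, hρ⟩
  refine ⟨k⟮ρ⟯, adjoin.finiteDimensional hint, ?_, AdjoinSimple.gen k ρ, ?_⟩
  · rw [adjoin.finrank hint, ← hP]
    exact Polynomial.natDegree_le_of_dvd (minpoly.dvd k ρ hρ) hP0
  · apply (algebraMap k⟮ρ⟯ L).injective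
    simpa [P, AdjoinSimple.algebraMap_gen, ← IsScalarTower.algebraMap_apply] using hρ

theorem MvPolynomial.IsHomogeneous.exists_eval_smul_add_smul_eq_zero
    (hq : q.IsHomogeneous 2) (u v : Fin n → k) :
    ∃ K : IntermediateField k L, FiniteDimensional k K ∧ finrank k K ≤ 2 ∧
      ∃ s t : K, ¬(s = 0 ∧ t = 0) ∧
        eval (s • (algebraMap k K ∘ u) + t • (algebraMap k K ∘ v))
          (map (algebraMap k K) q) = 0 := by
  by_cases hv : eval v q = 0
  · refine ⟨⊥, inferInstance, IntermediateField.finrank_bot.le.trans one_le_two, 0, 1, by simp,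
      ?_⟩
    rw [hq.eval_map_smul_add_smul]
    simp [hv]
  · obtain ⟨K, hfin, hK, ρ, hρ⟩ := exists_intermediateField_finrank_le_two_quadratic_root
      (L := L) (b := polar hq.toQuadraticMap u v) (c := eval u q) hv
    refine ⟨K, hfin, hK, 1, ρ, by simp, ?_⟩
    rw [hq.eval_map_smul_add_smul]
    linear_combination hρ

theorem exists_hasPointIn_of_forall_mem_eval_eq_zero {a b : k} (ha : a ≠ 0)
    {W : Submodule k (Fin n → k)} (hW : finrank k W = 2)
    (hvan : ∀ w ∈ W, a * eval w q₁ + b * eval w q₂ = 0)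
    (h₁ : q₁.IsHomogeneous 2) (h₂ : q₂.IsHomogeneous 2) :
    ∃ K : IntermediateField k L, FiniteDimensional k K ∧ finrank k K ≤ 2 ∧
      HasPointIn q₁ q₂ K := by
  obtain ⟨w₁, hw₁, w₂, hw₂, hw⟩ := W.exists_linearIndependent_pair_of_finrank_eq_two hW
  obtain ⟨K, hfin, hK, s, t, hst, hx₂⟩ := h₂.exists_eval_smul_add_smul_eq_zero (L := L) w₁ w₂
  set ι := algebraMap k K
  have hpolar : a * polar h₁.toQuadraticMap w₁ w₂ + b * polar h₂.toQuadraticMap w₁ w₂ = 0 := by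
    simp only [polar, IsHomogeneous.toQuadraticMap_apply]
    linear_combination hvan _ (W.add_mem hw₁ hw₂) - hvan w₁ hw₁ - hvan w₂ hw₂
  have hpencil : ι a * eval (s • (ι ∘ w₁) + t • (ι ∘ w₂)) (map ι q₁) +
      ι b * eval (s • (ι ∘ w₁) + t • (ι ∘ w₂)) (map ι q₂) = 0 := by
    have hι₁ := congrArg ι (hvan w₁ hw₁)
    have hι₂ := congrArg ι (hvan w₂ hw₂)
    have hιp := congrArg ι hpolar
    simp only [map_add, map_mul, map_zero] at hι₁ hι₂ hιp
    rw [h₁.eval_map_smul_add_smul, h₂.eval_map_smul_add_smul]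
    linear_combination s ^ 2 * hι₁ + s * t * hιp + t ^ 2 * hι₂
  have hwK : LinearIndependent K ![ι ∘ w₁, ι ∘ w₂] := by
    rw [show ![ι ∘ w₁, ι ∘ w₂] = fun i ↦ ι ∘ ![w₁, w₂] i by ext i; fin_cases i <;> rfl]
    exact linearIndependent_algebraMap_comp_iff.2 hw
  refine ⟨K, hfin, hK, _, fun h0 ↦ hst (LinearIndependent.pair_iff.1 hwK s t h0), ?_, hx₂⟩
  rw [hx₂, mul_zero, add_zero, mul_eq_zero, map_eq_zero] at hpencil
  exact hpencil.resolve_left ha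

theorem exists_hasPointIn_of_pencilHasTotallyIsotropicPlane (h₁ : q₁.IsHomogeneous 2)
    (h₂ : q₂.IsHomogeneous 2)
    (h : PencilHasTotallyIsotropicPlane h₁.toQuadraticMap h₂.toQuadraticMap) :
    ∃ K : IntermediateField k L, FiniteDimensional k K ∧ finrank k K ≤ 2 ∧
      HasPointIn q₁ q₂ K := by
  obtain ⟨a, b, W, hab, hW, hvan⟩ := h
  simp only [add_apply, smul_apply, smul_eq_mul, IsHomogeneous.toQuadraticMap_apply] at hvan
  by_cases ha : a = 0
  · obtain ⟨K, hfin, hK, x, hx, hx₂, hx₁⟩ := exists_hasPointIn_of_forall_mem_eval_eq_zero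
      (L := L) (b := a) (hab ⟨ha, ·⟩) hW (fun w hw ↦ by linear_combination hvan w hw) h₂ h₁
    exact ⟨K, hfin, hK, x, hx, hx₁, hx₂⟩
  · exact exists_hasPointIn_of_forall_mem_eval_eq_zero ha hW hvan h₁ h₂

end Points

theorem line_on_pencil_iff_quadratic_point_general
    (k : Type) [Field k]
    (q₁ q₂ : MvPolynomial (Fin 5) k)
    (h1 : q₁.IsHomogeneous 2) (h2 : q₂.IsHomogeneous 2) :
    (∃ (a b : k) (W : Submodule k (Fin 5 → k)), ¬(a = 0 ∧ b = 0) ∧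
      Module.finrank k W = 2 ∧ ∀ w ∈ W, eval w (a • q₁ + b • q₂) = 0) ↔
    (∃ K : IntermediateField k (AlgebraicClosure k),
      FiniteDimensional k K ∧ Module.finrank k K ≤ 2 ∧ HasPointIn q₁ q₂ K) := by
  have hpencil : (∃ (a b : k) (W : Submodule k (Fin 5 → k)), ¬(a = 0 ∧ b = 0) ∧
      finrank k W = 2 ∧ ∀ w ∈ W, eval w (a • q₁ + b • q₂) = 0) ↔
      PencilHasTotallyIsotropicPlane h1.toQuadraticMap h2.toQuadraticMap := by
    simp [PencilHasTotallyIsotropicPlane, smul_eval]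
  rw [hpencil]
  refine ⟨exists_hasPointIn_of_pencilHasTotallyIsotropicPlane h1 h2, ?_⟩
  rintro ⟨K, hfin, hK, hx⟩
  obtain hK | hK : finrank k K = 1 ∨ finrank k K = 2 := by
    have := finrank_pos (R := k) (M := K); omega
  · obtain rfl := IntermediateField.finrank_eq_one_iff.1 hK
    exact pencilHasTotallyIsotropicPlane_of_hasPointIn_self (by norm_num) h1 h2
      (hx.map (IntermediateField.botEquiv k _).toAlgHom)
  · exact pencilHasTotallyIsotropicPlane_of_hasPointIn_of_finrank_eq_two (by norm_num) hK h1 h2 hx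

/-- For a smooth complete intersection of two quadrics `X ⊂ ℙ⁴` over a field of
characteristic different from `2`, the following are equivalent: (i) some quadric in the
pencil spanned by `q₁, q₂` contains a line defined over `k`; (ii) `X` has a point over some
extension of `k` of degree at most `2`. -/
theorem line_on_pencil_iff_quadratic_point
    (k : Type) [Field k] (hchar : ringChar k ≠ 2)
    (q₁ q₂ : MvPolynomial (Fin 5) k)
    (h1 : q₁.IsHomogeneous 2) (h2 : q₂.IsHomogeneous 2)
    (hs : DefinesSmoothCI q₁ q₂) :
    (∃ (a b : k) (W : Submodule k (Fin 5 → k)), ¬(a = 0 ∧ b = 0) ∧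
      Module.finrank k W = 2 ∧ ∀ w ∈ W, eval w (a • q₁ + b • q₂) = 0) ↔
    (∃ K : IntermediateField k (AlgebraicClosure k),
      FiniteDimensional k K ∧ Module.finrank k K ≤ 2 ∧ HasPointIn q₁ q₂ K) :=
  line_on_pencil_iff_quadratic_point_general k q₁ q₂ h1 h2
end
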